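/- arXiv:1411.7564 — 2 statements merged into one kernel-verified Lean document; each statement's English description precedes it below -/
import Mathlib

section
/- On the real inner product space of symmetric n×n real matrices equipped with the Frobenius inner product, the function ζ(X) = (1/2)‖Π(X)‖²_F, where Π(X) is the metric projection of X onto the cone of positive semidefinite matrices, is Fréchet differentiable at every symmetric matrix X, with derivative the linear functional H ↦ ⟨Π(X), H⟩. (The gradient of ζ at X is Π(X).) -/
/-!
For a convex cone `K` and the nearest-point map `p`, the variational inequality gives
`⟪x - p x, p x⟫ = 0` and `⟪x - p x, k⟫ ≤ 0` for `k ∈ K`. Hence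
`⟪p x, y - x⟫ ≤ ½‖p y‖² - ½‖p x‖² ≤ ⟪p y, y - x⟫`, and firm nonexpansiveness
`‖p y - p x‖² ≤ ⟪p y - p x, y - x⟫` bounds the gap between the outer terms by `‖y - x‖²`,
so the remainder of the linearization is quadratic. The trace form `⟪A, B⟫ = tr (Aᵀ B)` makes
matrices with the Frobenius norm an inner product space, so this applies to the PSD cone.
-/

open Matrix

/-- Frobenius (trace) inner product of two real `n × n` matrices. -/
noncomputable def frobInner {n : ℕ} (A B : Matrix (Fin n) (Fin n) ℝ) : ℝ :=
  (Aᵀ * B).trace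

/-- Squared Frobenius norm of a real `n × n` matrix. -/
noncomputable def frobNormSq {n : ℕ} (X : Matrix (Fin n) (Fin n) ℝ) : ℝ :=
  (Xᵀ * X).trace

/-- Frobenius norm of a real `n × n` matrix. -/
noncomputable def frobNorm {n : ℕ} (X : Matrix (Fin n) (Fin n) ℝ) : ℝ :=
  Real.sqrt (frobNormSq X)

/-- `proj` is the metric projection onto the PSD cone: for every symmetric `X`,
`proj X` is PSD and is nearest to `X` in Frobenius norm among all PSD matrices. -/
def IsPSDProjection {n : ℕ}
    (proj : Matrix (Fin n) (Fin n) ℝ → Matrix (Fin n) (Fin n) ℝ) : Prop :=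
  ∀ X : Matrix (Fin n) (Fin n) ℝ, X.IsSymm →
    (proj X).PosSemidef ∧
      ∀ Y : Matrix (Fin n) (Fin n) ℝ, Y.PosSemidef →
        frobNorm (proj X - X) ≤ frobNorm (Y - X)

-- Equip the matrix space with the Frobenius norm.
attribute [local instance] Matrix.frobeniusNormedAddCommGroup Matrix.frobeniusNormedSpace

open Asymptotics
open scoped RealInnerProductSpace

section MetricProjection

variable {E : Type*} [NormedAddCommGroup E] [InnerProductSpace ℝ E]

def IsMetricProjectionOn (K S : Set E) (p : E → E) : Prop :=
  ∀ x ∈ S, p x ∈ K ∧ ∀ y ∈ K, ‖p x - x‖ ≤ ‖y - x‖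

variable {K : PointedCone ℝ E} {S : Set E} {p : E → E} {x y : E}

theorem IsMetricProjectionOn.inner_sub_le_zero (hp : IsMetricProjectionOn K S p) (hx : x ∈ S)
    {z : E} (hz : z ∈ K) : ⟪x - p x, z - p x⟫ ≤ 0 := by
  obtain ⟨hpK, hmin⟩ := hp x hx
  refine (norm_eq_iInf_iff_real_inner_le_zero K.convex hpK).1 ?_ z hz
  refine le_antisymm (le_ciInf fun w => ?_) (ciInf_le ⟨0, ?_⟩ (⟨p x, hpK⟩ : K))
  · simpa only [norm_sub_rev x] using hmin w w.2
  · rintro _ ⟨w, rfl⟩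
    exact norm_nonneg _

theorem IsMetricProjectionOn.inner_le_zero (hp : IsMetricProjectionOn K S p) (hx : x ∈ S)
    {z : E} (hz : z ∈ K) : ⟪x - p x, z⟫ ≤ 0 := by
  simpa using hp.inner_sub_le_zero hx (K.add_mem hz (hp x hx).1)

theorem IsMetricProjectionOn.inner_eq_zero (hp : IsMetricProjectionOn K S p) (hx : x ∈ S) :
    ⟪x - p x, p x⟫ = 0 := by
  have h := hp.inner_sub_le_zero hx K.zero_mem
  rw [zero_sub, inner_neg_right] at h
  exact le_antisymm (hp.inner_le_zero hx (hp x hx).1) (neg_nonpos.1 h)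

theorem IsMetricProjectionOn.inner_le_half_norm_sq_sub (hp : IsMetricProjectionOn K S p)
    (hx : x ∈ S) (hy : y ∈ S) :
    ⟪p x, y - x⟫ ≤ ‖p y‖ ^ 2 / 2 - ‖p x‖ ^ 2 / 2 := by
  have h₁ := hp.inner_le_zero hy (hp x hx).1
  have h₂ := hp.inner_eq_zero hx
  have h₃ := norm_sub_sq_real (p y) (p x)
  rw [inner_sub_left] at h₁
  rw [inner_sub_left, real_inner_self_eq_norm_sq] at h₂
  rw [inner_sub_right, real_inner_comm x, real_inner_comm y]
  linarith [sq_nonneg ‖p y - p x‖, real_inner_comm (p x) (p y)]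

theorem IsMetricProjectionOn.norm_sub_sq_le_inner (hp : IsMetricProjectionOn K S p)
    (hx : x ∈ S) (hy : y ∈ S) : ‖p y - p x‖ ^ 2 ≤ ⟪p y - p x, y - x⟫ := by
  have h₁ := hp.inner_sub_le_zero hx (hp y hy).1
  have h₂ := hp.inner_sub_le_zero hy (hp x hx).1
  have : ‖p y - p x‖ ^ 2 - ⟪p y - p x, y - x⟫ = ⟪x - p x, p y - p x⟫ + ⟪y - p y, p x - p y⟫ := by
    rw [← real_inner_self_eq_norm_sq]
    simp only [inner_sub_left, inner_sub_right, real_inner_comm]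
    ring
  linarith

theorem IsMetricProjectionOn.hasFDerivWithinAt_half_norm_sq (hp : IsMetricProjectionOn K S p)
    (hx : x ∈ S) :
    HasFDerivWithinAt (fun y => (1 / 2 : ℝ) * ‖p y‖ ^ 2) (innerSL ℝ (p x)) S x := by
  have bound : ∀ y ∈ S,
      ‖(1 / 2 : ℝ) * ‖p y‖ ^ 2 - (1 / 2 : ℝ) * ‖p x‖ ^ 2 - innerSL ℝ (p x) (y - x)‖
        ≤ ‖‖y - x‖ ^ 2‖ := by
    intro y hy
    have lower := hp.inner_le_half_norm_sq_sub hx hy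
    have upper := hp.inner_le_half_norm_sq_sub hy hx
    have firm := hp.norm_sub_sq_le_inner hx hy
    have h₃ := norm_sub_sq_real (p y - p x) (y - x)
    rw [innerSL_apply_apply, norm_pow, norm_norm, Real.norm_eq_abs, abs_le]
    rw [← neg_sub y, inner_neg_right] at upper
    have : ⟪p y - p x, y - x⟫ = ⟪p y, y - x⟫ - ⟪p x, y - x⟫ := inner_sub_left _ _ _
    constructor <;> linarith [sq_nonneg ‖p y - p x - (y - x)‖, sq_nonneg ‖y - x‖]
  rw [hasFDerivWithinAt_iff_isLittleO]
  exact (IsBigO.of_bound' (eventually_nhdsWithin_of_forall bound)).trans_isLittleO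
    ((isLittleO_pow_sub_sub x one_lt_two).mono nhdsWithin_le_nhds)

end MetricProjection

namespace Matrix

variable {m n : Type*} [Fintype m] [Fintype n]

theorem trace_transpose_mul_eq_sum (A B : Matrix m n ℝ) :
    (Aᵀ * B).trace = ∑ i, ∑ j, A i j * B i j := by
  simp only [trace, diag_apply, mul_apply, transpose_apply]
  exact Finset.sum_comm

theorem frobenius_norm_sq_eq_trace (A : Matrix m n ℝ) : ‖A‖ ^ 2 = (Aᵀ * A).trace := by
  rw [frobenius_norm_def, trace_transpose_mul_eq_sum, ← Real.rpow_natCast,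
    ← Real.rpow_mul (by positivity)]
  norm_num [← sq]

noncomputable abbrev frobeniusInnerProductSpace : InnerProductSpace ℝ (Matrix m n ℝ) where
  toNormedSpace := frobeniusNormedSpace
  inner A B := (Aᵀ * B).trace
  norm_sq_eq_re_inner := frobenius_norm_sq_eq_trace
  conj_inner_symm A B := by simp [trace_transpose_mul_eq_sum, mul_comm]
  add_left A B C := by simp [transpose_add, Matrix.add_mul]
  smul_left A B r := by simp

def posSemidefCone (n : Type*) [Fintype n] : PointedCone ℝ (Matrix n n ℝ) where
  carrier := {A | A.PosSemidef}
  add_mem' := PosSemidef.add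
  zero_mem' := PosSemidef.zero
  smul_mem' c _ hA := hA.smul c.2

end Matrix

attribute [local instance] Matrix.frobeniusInnerProductSpace

theorem frobNorm_eq_norm {n : ℕ} (A : Matrix (Fin n) (Fin n) ℝ) : frobNorm A = ‖A‖ := by
  rw [frobNorm, frobNormSq, ← frobenius_norm_sq_eq_trace, Real.sqrt_sq (norm_nonneg A)]

theorem IsPSDProjection.isMetricProjectionOn {n : ℕ}
    {proj : Matrix (Fin n) (Fin n) ℝ → Matrix (Fin n) (Fin n) ℝ} (hproj : IsPSDProjection proj) :
    IsMetricProjectionOn (posSemidefCone (Fin n)) {Y | Y.IsSymm} proj := fun X hX =>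
  ⟨(hproj X hX).1, fun Y hY => by simpa only [frobNorm_eq_norm] using (hproj X hX).2 Y hY⟩

/-- The function `ζ(X) = (1/2)‖Π(X)‖²_F` is Fréchet differentiable at every symmetric
matrix `X` (within the subspace of symmetric matrices), with derivative the linear
functional `H ↦ ⟨Π(X), H⟩`; i.e. the gradient of `ζ` at `X` is `Π(X)`. -/
theorem stmt_6 (n : ℕ)
    (proj : Matrix (Fin n) (Fin n) ℝ → Matrix (Fin n) (Fin n) ℝ)
    (hproj : IsPSDProjection proj)
    (X : Matrix (Fin n) (Fin n) ℝ) (hX : X.IsSymm) :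
    ∃ L : Matrix (Fin n) (Fin n) ℝ →L[ℝ] ℝ,
      (∀ H : Matrix (Fin n) (Fin n) ℝ, L H = frobInner (proj X) H) ∧
      HasFDerivWithinAt (fun Y => (1 / 2 : ℝ) * frobNormSq (proj Y)) L
        {Y : Matrix (Fin n) (Fin n) ℝ | Y.IsSymm} X := by
  refine ⟨innerSL ℝ (proj X), fun H => rfl, ?_⟩
  simp only [frobNormSq, ← frobenius_norm_sq_eq_trace]
  exact hproj.isMetricProjectionOn.hasFDerivWithinAt_half_norm_sq hX
end

section
/- Optimality certificate for the regularized SDP: let A, B_1, …, B_m be symmetric real n×n matrices, b ∈ ℝ^m, γ > 0, and let {1,…,m} be partitioned into index sets I_eq and I_in. Suppose u ∈ ℝ^m satisfies u_i ≥ 0 for all i ∈ I_in, and set X := γ Π(C(u)) with C(u) = −A − Σ_{i=1}^m u_i B_i, where Π denotes the metric projection onto the PSD cone. If X satisfies ⟨B_i, X⟩ = b_i for all i ∈ I_eq and ⟨B_i, X⟩ ≤ b_i for all i ∈ I_in, and the complementary slackness condition Σ_{i=1}^m u_i(⟨B_i, X⟩ − b_i) = 0 holds, then d_γ(u) = p_γ(X),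 and consequently X minimizes p_γ(Y) = ⟨A, Y⟩ + (1/(2γ))‖Y‖²_F over all PSD matrices Y satisfying ⟨B_i, Y⟩ = b_i for i ∈ I_eq and ⟨B_i, Y⟩ ≤ b_i for i ∈ I_in, and u maximizes d_γ over the dual feasible set. -/
open Matrix

/-- `C(u) = −A − Σᵢ uᵢ Bᵢ`. -/
noncomputable def Cmat {n m : ℕ} (A : Matrix (Fin n) (Fin n) ℝ)
    (B : Fin m → Matrix (Fin n) (Fin n) ℝ) (u : Fin m → ℝ) :
    Matrix (Fin n) (Fin n) ℝ :=
  -A - ∑ i, u i • B i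

/-- `d_γ(u) = −uᵀb − (γ/2)‖Π(C(u))‖²_F`. -/
noncomputable def dualObj {n m : ℕ} (A : Matrix (Fin n) (Fin n) ℝ)
    (B : Fin m → Matrix (Fin n) (Fin n) ℝ) (b : Fin m → ℝ) (γ : ℝ)
    (proj : Matrix (Fin n) (Fin n) ℝ → Matrix (Fin n) (Fin n) ℝ)
    (u : Fin m → ℝ) : ℝ :=
  -(∑ i, u i * b i) - (γ / 2) * frobNormSq (proj (Cmat A B u))

/-!
Weak duality `d_γ(v) ≤ p_γ(Y)`, for dual feasible `v` and primal feasible `Y`, combines two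
inequalities. The variational inequality of the projection, together with the orthogonality
`⟨Π(C) - C, Π(C)⟩ = 0` (the PSD cone is closed under scaling), gives `⟨Π(C) - C, Y⟩ ≥ 0` for
PSD `Y`, whence `⟨A, Y⟩ ≥ -⟨Π(C(v)), Y⟩ - vᵀb`; and Young's inequality bounds
`⟨Π(C(v)), Y⟩ ≤ (γ/2)‖Π(C(v))‖² + ‖Y‖²/(2γ)`. For `u` and `X = γ Π(C(u))` both are equalities, by
orthogonality and complementary slackness, so `d_γ(u) = p_γ(X)`, and the two optimality claims
follow from weak duality.
-/

section Frobenius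

variable {n : ℕ}

lemma frobInner_comm (A B : Matrix (Fin n) (Fin n) ℝ) : frobInner A B = frobInner B A := by
  rw [frobInner, ← trace_transpose, transpose_mul, transpose_transpose, frobInner]

@[simp]
lemma frobInner_add_left (A B C : Matrix (Fin n) (Fin n) ℝ) :
    frobInner (A + B) C = frobInner A C + frobInner B C := by
  simp [frobInner, add_mul]

@[simp]
lemma frobInner_sub_left (A B C : Matrix (Fin n) (Fin n) ℝ) :
    frobInner (A - B) C = frobInner A C - frobInner B C := by
  simp [frobInner, sub_mul]

@[simp]
lemma frobInner_neg_left (A B : Matrix (Fin n) (Fin n) ℝ) :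
    frobInner (-A) B = -frobInner A B := by
  simp [frobInner]

@[simp]
lemma frobInner_smul_left (c : ℝ) (A B : Matrix (Fin n) (Fin n) ℝ) :
    frobInner (c • A) B = c * frobInner A B := by
  simp [frobInner]

@[simp]
lemma frobInner_sum_left {ι : Type*} (s : Finset ι) (f : ι → Matrix (Fin n) (Fin n) ℝ)
    (C : Matrix (Fin n) (Fin n) ℝ) :
    frobInner (∑ i ∈ s, f i) C = ∑ i ∈ s, frobInner (f i) C := by
  simp [frobInner, transpose_sum, Finset.sum_mul, trace_sum]

@[simp]
lemma frobInner_add_right (A B C : Matrix (Fin n) (Fin n) ℝ) :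
    frobInner A (B + C) = frobInner A B + frobInner A C := by
  simp [frobInner, mul_add]

@[simp]
lemma frobInner_sub_right (A B C : Matrix (Fin n) (Fin n) ℝ) :
    frobInner A (B - C) = frobInner A B - frobInner A C := by
  simp [frobInner, mul_sub]

@[simp]
lemma frobInner_smul_right (c : ℝ) (A B : Matrix (Fin n) (Fin n) ℝ) :
    frobInner A (c • B) = c * frobInner A B := by
  simp [frobInner]

@[simp]
lemma frobInner_zero_right (A : Matrix (Fin n) (Fin n) ℝ) : frobInner A 0 = 0 := by
  simp [frobInner]

lemma frobNormSq_eq_frobInner (X : Matrix (Fin n) (Fin n) ℝ) : frobNormSq X = frobInner X X :=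
  rfl

lemma frobNormSq_nonneg (X : Matrix (Fin n) (Fin n) ℝ) : 0 ≤ frobNormSq X := by
  rw [frobNormSq, trace]
  refine Finset.sum_nonneg fun j _ ↦ ?_
  rw [diag_apply, mul_apply]
  exact Finset.sum_nonneg fun i _ ↦ mul_self_nonneg (X i j)

lemma frobNormSq_add (P Q : Matrix (Fin n) (Fin n) ℝ) :
    frobNormSq (P + Q) = frobNormSq P + 2 * frobInner P Q + frobNormSq Q := by
  simp only [frobNormSq_eq_frobInner, frobInner_add_left, frobInner_add_right,
    frobInner_comm Q P]
  ring

lemma frobNormSq_smul (c : ℝ) (X : Matrix (Fin n) (Fin n) ℝ) :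
    frobNormSq (c • X) = c ^ 2 * frobNormSq X := by
  simp only [frobNormSq_eq_frobInner, frobInner_smul_left, frobInner_smul_right]
  ring

lemma frobNorm_le_frobNorm_iff {X Y : Matrix (Fin n) (Fin n) ℝ} :
    frobNorm X ≤ frobNorm Y ↔ frobNormSq X ≤ frobNormSq Y :=
  Real.sqrt_le_sqrt_iff (frobNormSq_nonneg Y)

lemma frobInner_le_young {γ : ℝ} (hγ : 0 < γ) (P Y : Matrix (Fin n) (Fin n) ℝ) :
    frobInner P Y ≤ γ / 2 * frobNormSq P + 1 / (2 * γ) * frobNormSq Y := by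
  have hsq : 0 ≤ frobNormSq (Y + (-γ) • P) := frobNormSq_nonneg _
  rw [frobNormSq_add, frobNormSq_smul, frobInner_smul_right, frobInner_comm] at hsq
  rw [show γ / 2 * frobNormSq P + 1 / (2 * γ) * frobNormSq Y
      = (γ ^ 2 * frobNormSq P + frobNormSq Y) / (2 * γ) by field_simp,
    le_div_iff₀ (by positivity)]
  linarith

end Frobenius

lemma nonneg_of_forall_Ioc_add_mul_nonneg {s q : ℝ} (h : ∀ t ∈ Set.Ioc (0 : ℝ) 1, 0 ≤ s + t * q) :
    0 ≤ s := by
  have hlim : Filter.Tendsto (fun t ↦ s + t * q) (nhdsWithin 0 (Set.Ioi 0)) (nhds (s + 0 * q)) :=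
    ((continuous_const.add (continuous_id.mul continuous_const)).tendsto 0).mono_left
      nhdsWithin_le_nhds
  simpa using ge_of_tendsto hlim (Filter.eventually_of_mem (Ioc_mem_nhdsGT one_pos) h)

namespace IsPSDProjection

variable {n : ℕ} {proj : Matrix (Fin n) (Fin n) ℝ → Matrix (Fin n) (Fin n) ℝ}
  (hproj : IsPSDProjection proj) {C : Matrix (Fin n) (Fin n) ℝ} (hC : C.IsSymm)
include hproj hC

/-- Compare `proj C` with the points `(1 - t) • proj C + t • Y` of the PSD cone and let `t → 0⁺`. -/
lemma frobInner_sub_nonneg {Y : Matrix (Fin n) (Fin n) ℝ} (hY : Y.PosSemidef) :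
    0 ≤ frobInner (proj C - C) (Y - proj C) := by
  obtain ⟨hP, hmin⟩ := hproj C hC
  set P := proj C
  suffices ∀ t ∈ Set.Ioc (0 : ℝ) 1,
      0 ≤ 2 * frobInner (P - C) (Y - P) + t * frobNormSq (Y - P) by
    linarith [nonneg_of_forall_Ioc_add_mul_nonneg this]
  rintro t ⟨ht0, ht1⟩
  have hseg : ((1 - t) • P + t • Y).PosSemidef :=
    (hP.smul (sub_nonneg.2 ht1)).add (hY.smul ht0.le)
  have hle := frobNorm_le_frobNorm_iff.1 (hmin _ hseg)
  rw [show (1 - t) • P + t • Y - C = (P - C) + t • (Y - P) by module, frobNormSq_add,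
    frobInner_smul_right, frobNormSq_smul] at hle
  have : 0 ≤ t * (2 * frobInner (P - C) (Y - P) + t * frobNormSq (Y - P)) := by linarith
  exact nonneg_of_mul_nonneg_right this ht0

lemma frobInner_self_eq_zero : frobInner (proj C - C) (proj C) = 0 := by
  have hP := (hproj C hC).1
  have htwice := hproj.frobInner_sub_nonneg hC (hP.smul (zero_le_two : (0 : ℝ) ≤ 2))
  have hzero := hproj.frobInner_sub_nonneg hC PosSemidef.zero
  simp only [frobInner_sub_right, frobInner_smul_right, frobInner_zero_right] at htwice hzero
  linarith

lemma frobInner_nonneg {Y : Matrix (Fin n) (Fin n) ℝ} (hY : Y.PosSemidef) :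
    0 ≤ frobInner (proj C - C) Y := by
  simpa [hproj.frobInner_self_eq_zero hC] using hproj.frobInner_sub_nonneg hC hY

end IsPSDProjection

lemma sum_mul_le_sum_mul_of_feasible {ι : Type*} [Fintype ι] {Ieq Iin : Set ι}
    (hunion : Ieq ∪ Iin = Set.univ) {v x b : ι → ℝ} (hv : ∀ i ∈ Iin, 0 ≤ v i)
    (heq : ∀ i ∈ Ieq, x i = b i) (hin : ∀ i ∈ Iin, x i ≤ b i) :
    ∑ i, v i * x i ≤ ∑ i, v i * b i := by
  refine Finset.sum_le_sum fun i _ ↦ ?_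
  rcases (hunion ▸ Set.mem_univ i : i ∈ Ieq ∪ Iin) with hi | hi
  · rw [heq i hi]
  · exact mul_le_mul_of_nonneg_left (hin i hi) (hv i hi)

section Duality

variable {n m : ℕ} {A : Matrix (Fin n) (Fin n) ℝ} {B : Fin m → Matrix (Fin n) (Fin n) ℝ}

lemma Cmat_isSymm (hA : A.IsSymm) (hB : ∀ i, (B i).IsSymm) (w : Fin m → ℝ) :
    (Cmat A B w).IsSymm := by
  simp only [Cmat, IsSymm, transpose_sub, transpose_neg, transpose_sum, transpose_smul, hA.eq,
    fun i ↦ (hB i).eq]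

lemma frobInner_Cmat (w : Fin m → ℝ) (Z : Matrix (Fin n) (Fin n) ℝ) :
    frobInner (Cmat A B w) Z = -frobInner A Z - ∑ i, w i * frobInner (B i) Z := by
  simp only [Cmat, frobInner_sub_left, frobInner_neg_left, frobInner_sum_left, frobInner_smul_left]

noncomputable def primalObj (A : Matrix (Fin n) (Fin n) ℝ) (γ : ℝ) (X : Matrix (Fin n) (Fin n) ℝ) :
    ℝ :=
  frobInner A X + 1 / (2 * γ) * frobNormSq X

variable {b : Fin m → ℝ} {γ : ℝ} {proj : Matrix (Fin n) (Fin n) ℝ → Matrix (Fin n) (Fin n) ℝ}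

lemma dualObj_le_primalObj (hA : A.IsSymm) (hB : ∀ i, (B i).IsSymm) (hγ : 0 < γ)
    (hproj : IsPSDProjection proj) {v : Fin m → ℝ} {Y : Matrix (Fin n) (Fin n) ℝ}
    (hY : Y.PosSemidef) (hvY : ∑ i, v i * frobInner (B i) Y ≤ ∑ i, v i * b i) :
    dualObj A B b γ proj v ≤ primalObj A γ Y := by
  have hQ := hproj.frobInner_nonneg (Cmat_isSymm hA hB v) hY
  have hyoung := frobInner_le_young hγ (proj (Cmat A B v)) Y
  rw [frobInner_sub_left, frobInner_Cmat] at hQ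
  rw [dualObj, primalObj]
  linarith

lemma dualObj_eq_primalObj (hA : A.IsSymm) (hB : ∀ i, (B i).IsSymm)
    (hproj : IsPSDProjection proj) {u : Fin m → ℝ} {X : Matrix (Fin n) (Fin n) ℝ}
    (hX : X = γ • proj (Cmat A B u)) (hcs : ∑ i, u i * frobInner (B i) X = ∑ i, u i * b i) :
    dualObj A B b γ proj u = primalObj A γ X := by
  subst hX
  have horth := hproj.frobInner_self_eq_zero (Cmat_isSymm hA hB u)
  have hCX := frobInner_Cmat (A := A) (B := B) u (γ • proj (Cmat A B u))
  rw [frobInner_sub_left, sub_eq_zero, ← frobNormSq_eq_frobInner] at horth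
  rw [hcs, frobInner_smul_right, ← horth] at hCX
  have hscale : 1 / (2 * γ) * γ ^ 2 = γ / 2 := by
    rcases eq_or_ne γ 0 with rfl | hγ <;> field_simp
  rw [dualObj, primalObj, frobNormSq_smul, ← mul_assoc, hscale]
  linarith

end Duality

theorem stmt_16_general (n m : ℕ) (A : Matrix (Fin n) (Fin n) ℝ) (hA : A.IsSymm)
    (B : Fin m → Matrix (Fin n) (Fin n) ℝ) (hB : ∀ i, (B i).IsSymm)
    (b : Fin m → ℝ) (γ : ℝ) (hγ : 0 < γ)
    (Ieq Iin : Set (Fin m)) (hunion : Ieq ∪ Iin = Set.univ)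
    (proj : Matrix (Fin n) (Fin n) ℝ → Matrix (Fin n) (Fin n) ℝ)
    (hproj : IsPSDProjection proj)
    (u : Fin m → ℝ) (hu : ∀ i ∈ Iin, 0 ≤ u i)
    (X : Matrix (Fin n) (Fin n) ℝ) (hXdef : X = γ • proj (Cmat A B u))
    (heq : ∀ i ∈ Ieq, frobInner (B i) X = b i)
    (hin : ∀ i ∈ Iin, frobInner (B i) X ≤ b i)
    (hcs : ∑ i, u i * (frobInner (B i) X - b i) = 0) :
    dualObj A B b γ proj u = frobInner A X + (1 / (2 * γ)) * frobNormSq X ∧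
      (∀ Y : Matrix (Fin n) (Fin n) ℝ, Y.PosSemidef →
        (∀ i ∈ Ieq, frobInner (B i) Y = b i) →
        (∀ i ∈ Iin, frobInner (B i) Y ≤ b i) →
        frobInner A X + (1 / (2 * γ)) * frobNormSq X ≤
          frobInner A Y + (1 / (2 * γ)) * frobNormSq Y) ∧
      (∀ v : Fin m → ℝ, (∀ i ∈ Iin, 0 ≤ v i) →
        dualObj A B b γ proj v ≤ dualObj A B b γ proj u) := by
  have hcs' : ∑ i, u i * frobInner (B i) X = ∑ i, u i * b i := by
    simpa [mul_sub, Finset.sum_sub_distrib, sub_eq_zero] using hcs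
  have hX : X.PosSemidef := hXdef ▸ (hproj _ (Cmat_isSymm hA hB u)).1.smul hγ.le
  have hstrong := dualObj_eq_primalObj hA hB hproj hXdef hcs'
  refine ⟨hstrong, fun Y hY hYeq hYin ↦ ?_, fun v hv ↦ ?_⟩
  · exact hstrong.symm.trans_le <| dualObj_le_primalObj hA hB hγ hproj hY
      (sum_mul_le_sum_mul_of_feasible hunion hu hYeq hYin)
  · exact (dualObj_le_primalObj hA hB hγ hproj hX
      (sum_mul_le_sum_mul_of_feasible hunion hv heq hin)).trans_eq hstrong.symm

/-- Optimality certificate for the regularized SDP: if `u` is dual feasible,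
`X = γ Π(C(u))` is primal feasible, and complementary slackness holds, then
`d_γ(u) = p_γ(X)`; consequently `X` minimizes `p_γ` over the primal feasible set and
`u` maximizes `d_γ` over the dual feasible set. -/
theorem stmt_16 (n m : ℕ) (A : Matrix (Fin n) (Fin n) ℝ) (hA : A.IsSymm)
    (B : Fin m → Matrix (Fin n) (Fin n) ℝ) (hB : ∀ i, (B i).IsSymm)
    (b : Fin m → ℝ) (γ : ℝ) (hγ : 0 < γ)
    (Ieq Iin : Set (Fin m)) (hunion : Ieq ∪ Iin = Set.univ) (hdisj : Disjoint Ieq Iin)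
    (proj : Matrix (Fin n) (Fin n) ℝ → Matrix (Fin n) (Fin n) ℝ)
    (hproj : IsPSDProjection proj)
    (u : Fin m → ℝ) (hu : ∀ i ∈ Iin, 0 ≤ u i)
    (X : Matrix (Fin n) (Fin n) ℝ) (hXdef : X = γ • proj (Cmat A B u))
    (heq : ∀ i ∈ Ieq, frobInner (B i) X = b i)
    (hin : ∀ i ∈ Iin, frobInner (B i) X ≤ b i)
    (hcs : ∑ i, u i * (frobInner (B i) X - b i) = 0) :
    dualObj A B b γ proj u = frobInner A X + (1 / (2 * γ)) * frobNormSq X ∧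
      (∀ Y : Matrix (Fin n) (Fin n) ℝ, Y.PosSemidef →
        (∀ i ∈ Ieq, frobInner (B i) Y = b i) →
        (∀ i ∈ Iin, frobInner (B i) Y ≤ b i) →
        frobInner A X + (1 / (2 * γ)) * frobNormSq X ≤
          frobInner A Y + (1 / (2 * γ)) * frobNormSq Y) ∧
      (∀ v : Fin m → ℝ, (∀ i ∈ Iin, 0 ≤ v i) →
        dualObj A B b γ proj v ≤ dualObj A B b γ proj u) :=
  stmt_16_general n m A hA B hB b γ hγ Ieq Iin hunion proj hproj u hu X hXdef heq hin hcs
end
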